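/- arXiv:0910.3713 — 2 statements merged into one kernel-verified Lean document; each statement's English description precedes it below -/
import Mathlib

section
/- Let P_S be the noisy parity distribution with η ∈ (0,1/2) and E a full-support distribution on {0,1}^{n+1} with KL(P_S||E) ≤ ε·(1−H(η)). Define the predictor E'(x) = argmax_b E(x,b) (ties broken to ¬f_S(x)). Then Pr_{x uniform in {0,1}^n}[E'(x) ≠ f_S(x)] ≤ ε. -/
/-!
Split the divergence by the chain rule into the divergence of the `x`-marginals, which is
nonnegative since `P_S` has uniform marginal, plus the average over `x` of the binary divergence
`KL((1-η, η) ‖ (q_x, 1-q_x))`, where `q_x` is the conditional weight `E` gives to the correct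
label. These binary divergences are nonnegative, and whenever the predictor errs we have
`q_x ≤ 1/2`, which forces `KL((1-η, η) ‖ (q_x, 1-q_x)) ≥ KL((1-η, η) ‖ (1/2, 1/2)) = 1 - H(η)`.
Hence the error fraction times `1 - H(η)` is at most `ε (1 - H(η))`, and `1 - H(η) > 0`.
-/

open Real Finset

noncomputable def binKL (u v : ℝ) : ℝ := u * log (u / v) + (1 - u) * log ((1 - u) / (1 - v))

lemma sub_le_mul_log_div {p q : ℝ} (hp : 0 < p) (hq : 0 < q) : p - q ≤ p * log (p / q) := by
  have h := mul_le_mul_of_nonneg_left (log_le_sub_one_of_pos (div_pos hq hp)) hp.le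
  rw [mul_sub, mul_div_cancel₀ _ hp.ne', mul_one, ← neg_neg (log (q / p)), ← log_inv,
    inv_div] at h
  linarith

lemma sum_sub_sum_le_sum_mul_log_div {ι : Type*} (s : Finset ι) {p q : ι → ℝ}
    (hp : ∀ i ∈ s, 0 < p i) (hq : ∀ i ∈ s, 0 < q i) :
    ∑ i ∈ s, p i - ∑ i ∈ s, q i ≤ ∑ i ∈ s, p i * log (p i / q i) := by
  rw [← sum_sub_distrib]
  exact sum_le_sum fun i hi => sub_le_mul_log_div (hp i hi) (hq i hi)

lemma binKL_nonneg {u v : ℝ} (hu₀ : 0 < u) (hu₁ : u < 1) (hv₀ : 0 < v) (hv₁ : v < 1) :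
    0 ≤ binKL u v := by
  have h₁ := sub_le_mul_log_div hu₀ hv₀
  have h₂ := sub_le_mul_log_div (sub_pos.2 hu₁) (sub_pos.2 hv₁)
  rw [binKL]
  linarith

lemma log_two_sub_binEntropy_le_binKL {u v : ℝ} (hu₀ : 2⁻¹ ≤ u) (hu₁ : u < 1) (hv₀ : 0 < v)
    (hv₁ : v ≤ 2⁻¹) : log 2 - binEntropy u ≤ binKL u v := by
  have hv₁' : 0 < 1 - v := by linarith
  have hu₁' : 0 < 1 - u := by linarith
  have hu₀' : 0 < u := by linarith
  -- `1 - q ≤ log (1 / q)` at `q = 2v` and `q = 2(1 - v)`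
  have h₁ := sub_le_mul_log_div one_pos (by positivity : 0 < 2 * v)
  have h₂ := sub_le_mul_log_div one_pos (by positivity : 0 < 2 * (1 - v))
  have key : 0 ≤ (2 * u - 1) * (1 - 2 * v) := mul_nonneg (by linarith) (by linarith)
  simp only [one_mul, one_div, log_inv, log_mul two_ne_zero hv₀.ne',
    log_mul two_ne_zero hv₁'.ne'] at h₁ h₂
  rw [binKL, binEntropy, log_div hu₀'.ne' hv₀.ne', log_div hu₁'.ne' hv₁'.ne', log_inv, log_inv]
  nlinarith

lemma mul_log_div_add_mul_log_div_eq {t u a b : ℝ} (ht : 0 < t) (hu₀ : 0 < u) (hu₁ : u < 1)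
    (ha : 0 < a) (hb : 0 < b) :
    t * u * log (t * u / a) + t * (1 - u) * log (t * (1 - u) / b)
      = t * log (t / (a + b)) + t * binKL u (a / (a + b)) := by
  have hab : 0 < a + b := add_pos ha hb
  have hu₁' : 0 < 1 - u := by linarith
  have hb' : 1 - a / (a + b) = b / (a + b) := by field_simp; ring
  rw [binKL, hb', div_div_eq_mul_div, div_div_eq_mul_div]
  simp only [log_div, log_mul, ht.ne', hu₀.ne', hu₁'.ne', ha.ne', hb.ne', hab.ne',
    mul_ne_zero, ne_eq, not_false_eq_true]
  ring

lemma sum_prod_bool_eq_sum_add_not {X M : Type*} [Fintype X] [AddCommMonoid M] (f : X → Bool)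
    (g : X × Bool → M) : ∑ ω, g ω = ∑ x, (g (x, f x) + g (x, !f x)) := by
  rw [Fintype.sum_prod_type]
  refine sum_congr rfl fun x _ => ?_
  rw [Fintype.sum_bool]
  cases f x <;> simp [add_comm]

theorem card_div_card_mul_log_two_sub_binEntropy_le_sum {X : Type*} [Fintype X] [Nonempty X]
    (f : X → Bool) {η : ℝ} (hη₀ : 0 < η) (hη₁ : η ≤ 2⁻¹) (P E : X × Bool → ℝ)
    (hP : ∀ ω, P ω = if ω.2 = f ω.1 then (1 - η) / Fintype.card X else η / Fintype.card X)
    (hEpos : ∀ ω, 0 < E ω) (hEsum : ∑ ω, E ω = 1) :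
    (#{x | E (x, f x) ≤ E (x, !f x)} : ℝ) / Fintype.card X * (log 2 - binEntropy η)
      ≤ ∑ ω, P ω * log (P ω / E ω) := by
  set N : ℝ := (Fintype.card X : ℝ)
  have hN : 0 < N := by simp [N, Fintype.card_pos]
  set m : X → ℝ := fun x => E (x, f x) + E (x, !f x)
  have hm : ∀ x, 0 < m x := fun x => add_pos (hEpos _) (hEpos _)
  set D : X → ℝ := fun x => binKL (1 - η) (E (x, f x) / m x)
  have hmarginal : 0 ≤ ∑ x, N⁻¹ * log (N⁻¹ / m x) := by
    have h := sum_sub_sum_le_sum_mul_log_div univ (fun _ _ => inv_pos.2 hN) (fun x _ => hm x)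
    rwa [sum_const, card_univ, nsmul_eq_mul, mul_inv_cancel₀ hN.ne',
      ← sum_prod_bool_eq_sum_add_not f E, hEsum, sub_self] at h
  have hbad : (#{x | E (x, f x) ≤ E (x, !f x)} : ℝ) * (log 2 - binEntropy η) ≤ ∑ x, D x := by
    calc _ ≤ ∑ x ∈ {x | E (x, f x) ≤ E (x, !f x)}, D x := by
          rw [← nsmul_eq_mul]
          refine card_nsmul_le_sum _ _ _ fun x hx => ?_
          rw [← binEntropy_one_sub]
          refine log_two_sub_binEntropy_le_binKL (by linarith) (by linarith)
            (div_pos (hEpos _) (hm x)) ?_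
          rw [div_le_iff₀ (hm x)]
          linarith [(mem_filter.1 hx).2]
      _ ≤ ∑ x, D x := sum_le_sum_of_subset_of_nonneg (subset_univ _) fun x _ _ =>
          binKL_nonneg (by linarith) (by linarith) (div_pos (hEpos _) (hm x))
            ((div_lt_one (hm x)).2 (lt_add_of_pos_right _ (hEpos _)))
  have hsplit : ∑ ω, P ω * log (P ω / E ω)
      = ∑ x, N⁻¹ * log (N⁻¹ / m x) + N⁻¹ * ∑ x, D x := by
    rw [sum_prod_bool_eq_sum_add_not f, mul_sum, ← sum_add_distrib]
    refine sum_congr rfl fun x _ => ?_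
    have hPx : P (x, f x) = N⁻¹ * (1 - η) ∧ P (x, !f x) = N⁻¹ * (1 - (1 - η)) := by
      simp [hP, N, div_eq_inv_mul]
    rw [hPx.1, hPx.2]
    exact mul_log_div_add_mul_log_div_eq (inv_pos.2 hN) (by linarith) (by linarith)
      (hEpos _) (hEpos _)
  rw [hsplit, div_mul_eq_mul_div, div_eq_inv_mul]
  linarith [mul_le_mul_of_nonneg_left hbad (inv_nonneg.2 hN.le)]

lemma one_sub_binEntropy_logb_eq (η : ℝ) :
    1 - (-(η * logb 2 η) - (1 - η) * logb 2 (1 - η)) = (log 2 - binEntropy η) / log 2 := by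
  have := log_pos one_lt_two
  rw [binEntropy, log_inv, log_inv, logb, logb]
  field_simp
  ring

theorem stmt15_general (n : ℕ) (η ε : ℝ) (hη : 0 < η) (hη' : η < 1 / 2)
    (fS : (Fin n → Bool) → Bool)
    (PS : ((Fin n → Bool) × Bool) → ℝ)
    (hPS : ∀ ω, PS ω = if ω.2 = fS ω.1 then (1 - η) / 2 ^ n else η / 2 ^ n)
    (E : ((Fin n → Bool) × Bool) → ℝ) (hEpos : ∀ ω, 0 < E ω) (hEsum : ∑ ω, E ω = 1)
    (hKL : ∑ ω, PS ω * Real.logb 2 (PS ω / E ω) ≤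
      ε * (1 - (-(η * Real.logb 2 η) - (1 - η) * Real.logb 2 (1 - η))))
    (E' : (Fin n → Bool) → Bool)
    (hE' : ∀ x, E' x = if E (x, fS x) ≤ E (x, !(fS x)) then !(fS x) else fS x) :
    ((Finset.univ.filter fun x : Fin n → Bool => E' x ≠ fS x).card : ℝ) / 2 ^ n ≤ ε := by
  have hcard : (Fintype.card (Fin n → Bool) : ℝ) = 2 ^ n := by simp
  have hgap : 0 < log 2 - binEntropy η :=
    sub_pos.2 (binEntropy_lt_log_two.2 (hη'.trans_eq (one_div 2)).ne)
  have herr : (univ.filter fun x => E' x ≠ fS x)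
      = univ.filter fun x => E (x, fS x) ≤ E (x, !fS x) :=
    filter_congr fun x _ => by rw [hE']; split_ifs with h <;> simp [h]
  have hKL' : ∑ ω, PS ω * log (PS ω / E ω) ≤ ε * (log 2 - binEntropy η) := by
    rw [one_sub_binEntropy_logb_eq, ← mul_div_assoc] at hKL
    simp only [logb, mul_div_assoc', ← sum_div] at hKL
    rwa [div_le_div_iff_of_pos_right (log_pos one_lt_two)] at hKL
  have hcore := card_div_card_mul_log_two_sub_binEntropy_le_sum fS hη (by linarith) PS E
    (by simpa [hcard] using hPS) hEpos hEsum
  rw [hcard, ← herr] at hcore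
  exact le_of_mul_le_mul_right (hcore.trans hKL') hgap

/-- If `E` is a full-support distribution with `KL(P_S‖E) ≤ ε·(1-H(η))` (base-2 logs), then
the predictor `E'(x) = argmax_b E(x,b)` (ties broken to `¬f_S(x)`) errs on at most an `ε`
fraction of the `x ∈ {0,1}^n`. -/
theorem stmt15 (n : ℕ) (S : Finset (Fin n)) (η ε : ℝ) (hη : 0 < η) (hη' : η < 1 / 2)
    (hε : 0 ≤ ε)
    (fS : (Fin n → Bool) → Bool)
    (hfS : ∀ x, fS x = decide (Odd ((S.filter fun i => x i = true).card)))
    (PS : ((Fin n → Bool) × Bool) → ℝ)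
    (hPS : ∀ ω, PS ω = if ω.2 = fS ω.1 then (1 - η) / 2 ^ n else η / 2 ^ n)
    (E : ((Fin n → Bool) × Bool) → ℝ) (hEpos : ∀ ω, 0 < E ω) (hEsum : ∑ ω, E ω = 1)
    (hKL : ∑ ω, PS ω * Real.logb 2 (PS ω / E ω) ≤
      ε * (1 - (-(η * Real.logb 2 η) - (1 - η) * Real.logb 2 (1 - η))))
    (E' : (Fin n → Bool) → Bool)
    (hE' : ∀ x, E' x = if E (x, fS x) ≤ E (x, !(fS x)) then !(fS x) else fS x) :
    ((Finset.univ.filter fun x : Fin n → Bool => E' x ≠ fS x).card : ℝ) / 2 ^ n ≤ ε :=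
  stmt15_general n η ε hη hη' fS PS hPS E hEpos hEsum hKL E' hE'
end

section
/- In the noisy-parity quantum generator started at basis state (0,0,0), for every time t with t mod (n+1) = j and j ≥ min(S), the state |ψ_t⟩ is supported on a basis state (j,k,ℓ) where k = ⊕_{t' > t−j, t' mod (n+1) ∈ S} x_{t'}, i.e., the first coordinate of the 'half' index records the running parity of the measured bits at positions in S within the current block. -/
/-!
The state stays a basis vector up to a unit phase: the column of `U` at a basis state has
exactly two nonzero entries, and they lie in different measurement classes, so the projection
onto the observed outcome keeps exactly one of them. Following the surviving basis state, its
second coordinate is reset to the measured bit at position `min S` and is toggled by every later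
measured bit at a position of `S` in the same block, which is the block parity.
-/

open Classical in
/-- The unitary of the noisy-parity quantum generator. -/
noncomputable def qgU (n : ℕ) (S : Finset ℕ) (η : ℝ) :
    Matrix (Fin (n + 1) × Bool × Bool) (Fin (n + 1) × Bool × Bool) ℂ :=
  fun r c =>
    let j : Fin (n + 1) := c.1
    let k : Bool := c.2.1
    let l : Bool := c.2.2
    if (j : ℕ) < n then
      if (j : ℕ) + 1 ∉ S then
        if r = (j + 1, k, l) then ((Real.sqrt 2 : ℝ) : ℂ)⁻¹
        else if r = (j + 1, k, !l) then Complex.I * ((Real.sqrt 2 : ℝ) : ℂ)⁻¹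
        else 0
      else if (j : ℕ) + 1 = sInf (S : Set ℕ) then
        if r = (j + 1, k, l) then ((Real.sqrt 2 : ℝ) : ℂ)⁻¹
        else if r = (j + 1, !k, l) then Complex.I * ((Real.sqrt 2 : ℝ) : ℂ)⁻¹
        else 0
      else
        if r = (j + 1, xor k l, k) then ((Real.sqrt 2 : ℝ) : ℂ)⁻¹
        else if r = (j + 1, !(xor k l), k) then Complex.I * ((Real.sqrt 2 : ℝ) : ℂ)⁻¹
        else 0
    else
      if r = (j + 1, k, l) then ((Real.sqrt (1 - η) : ℝ) : ℂ)
      else if r = (j + 1, !k, l) then Complex.I * ((Real.sqrt η : ℝ) : ℂ)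
      else 0

open Classical in
/-- The measurement partition of the basis states into the two outcome classes:
for `j ∉ {0} ∪ S`, state `(j,k,b)` has outcome `b`; for `j ∈ S \ {min S}`,
state `(j, ℓ⊕b, ℓ)` has outcome `b`; otherwise `(j,b,ℓ)` has outcome `b`. -/
noncomputable def qgMeas (n : ℕ) (S : Finset ℕ) : Fin (n + 1) × Bool × Bool → Bool :=
  fun p =>
    let j : Fin (n + 1) := p.1
    let k : Bool := p.2.1
    let l : Bool := p.2.2
    if (j : ℕ) ≠ 0 ∧ (j : ℕ) ∉ S then l
    else if (j : ℕ) ∈ S ∧ (j : ℕ) ≠ sInf (S : Set ℕ) then xor k l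
    else k

open Classical in
/-- The projection onto the span of basis states with measurement outcome `o`. -/
noncomputable def qgProj (n : ℕ) (S : Finset ℕ) (o : Bool)
    (v : Fin (n + 1) × Bool × Bool → ℂ) : Fin (n + 1) × Bool × Bool → ℂ :=
  fun i => if qgMeas n S i = o then v i else 0

theorem inv_sqrt_sum_normSq_smul_single {ι : Type*} [DecidableEq ι] [Fintype ι] (r : ι) (a : ℂ) :
    ((Real.sqrt (∑ i, Complex.normSq ((Pi.single r a : ι → ℂ) i)) : ℝ) : ℂ)⁻¹ • Pi.single r a =
      Pi.single r ((‖a‖⁻¹ : ℂ) • a) := by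
  have : (fun i => Complex.normSq ((Pi.single r a : ι → ℂ) i)) = Pi.single r (Complex.normSq a) :=
    funext (Pi.apply_single (fun _ => Complex.normSq) (fun _ => map_zero _) r a)
  rw [this, Fintype.sum_pi_single', ← Complex.norm_def, ← Pi.single_smul]

theorem exists_apply_eq_ite_of_two_branch {ι : Type*} [DecidableEq ι] {U : Matrix ι ι ℂ}
    {meas : ι → Bool} {c r₁ r₂ t : ι} {a₁ a₂ : ℂ} {o : Bool}
    (hU : ∀ r, U r c = if r = r₁ then a₁ else if r = r₂ then a₂ else 0)
    (hmeas : meas r₂ = !meas r₁) (ha₁ : a₁ ≠ 0) (ha₂ : a₂ ≠ 0) (ht : t = r₁ ∨ t = r₂)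
    (hto : meas t = o) :
    ∃ a ≠ 0, ∀ r, meas r = o → U r c = if r = t then a else 0 := by
  subst hto
  have hne : ∀ r, meas r = meas r₁ → meas r = meas r₂ → False := fun r h₁ h₂ => by
    rw [h₁, hmeas] at h₂; cases meas r₁ <;> simp at h₂
  rcases ht with rfl | rfl
  · refine ⟨a₁, ha₁, fun r hr => ?_⟩
    have : r ≠ r₂ := by rintro rfl; exact hne r hr rfl
    simp [hU, this]
  · refine ⟨a₂, ha₂, fun r hr => ?_⟩
    have : r ≠ r₁ := by rintro rfl; exact hne r rfl hr
    simp [hU, this]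

theorem filter_mulVec_single_eq_single {ι : Type*} [DecidableEq ι] [Fintype ι]
    {U : Matrix ι ι ℂ} {meas : ι → Bool} {o : Bool} {c r : ι} {a : ℂ}
    (hU : ∀ i, meas i = o → U i c = if i = r then a else 0) (hr : meas r = o) (ρ : ℂ) :
    (fun i => if meas i = o then U.mulVec (Pi.single c ρ) i else 0) = Pi.single r (a * ρ) := by
  funext i
  rw [Matrix.mulVec_single]
  by_cases hi : meas i = o
  · simp [hi, hU i hi, Pi.single_apply]
  · have : i ≠ r := by rintro rfl; exact hi hr
    simp [hi, this]

theorem decide_odd_card_filter_Ioc_add_one {a b : ℕ} (h : a ≤ b) (p : ℕ → Prop)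
    [DecidablePred p] :
    decide (Odd ((Finset.Ioc a (b + 1)).filter p).card) =
      xor (decide (Odd ((Finset.Ioc a b).filter p).card)) (decide (p (b + 1))) := by
  rw [← Finset.insert_Ioc_right_eq_Ioc_add_one h, Finset.filter_insert]
  by_cases hp : p (b + 1)
  · rw [if_pos hp, Finset.card_insert_of_notMem (by simp)]
    simp only [Nat.odd_add_one, decide_not, hp, decide_true, Bool.xor_true]
  · simp [hp]

theorem Nat.add_one_mod_of_mod_lt {t n : ℕ} (h : t % (n + 1) < n) :
    (t + 1) % (n + 1) = t % (n + 1) + 1 := by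
  rw [Nat.add_mod, Nat.mod_eq_of_lt (a := 1) (by omega), Nat.mod_eq_of_lt (by omega)]

theorem Nat.mod_le_mod_of_mem_Ioc_sub_mod {t t' n : ℕ} (h : t' ∈ Finset.Ioc (t - t % (n + 1)) t) :
    t' % (n + 1) ≤ t % (n + 1) := by
  rw [Finset.mem_Ioc] at h
  have hdiv := Nat.mod_add_div t (n + 1)
  have hlt : t % (n + 1) < n + 1 := Nat.mod_lt t (by omega)
  have : t' = t' - (t - t % (n + 1)) + (n + 1) * (t / (n + 1)) := by omega
  rw [this, Nat.add_mul_mod_self_left, Nat.mod_eq_of_lt (by omega)]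
  omega

/-- The basis state to which `U` sends `c` with nonzero amplitude and whose measurement outcome
is `o`; its case split mirrors that of `qgMeas` at the target position `c.1 + 1`. -/
noncomputable def qgNext (n : ℕ) (S : Finset ℕ) (c : Fin (n + 1) × Bool × Bool) (o : Bool) :
    Fin (n + 1) × Bool × Bool :=
  let j := c.1 + 1
  if (j : ℕ) ≠ 0 ∧ (j : ℕ) ∉ S then (j, c.2.1, o)
  else if (j : ℕ) ∈ S ∧ (j : ℕ) ≠ sInf (S : Set ℕ) then (j, xor c.2.1 o, c.2.1)
  else (j, o, c.2.2)

theorem qgMeas_qgNext (n : ℕ) (S : Finset ℕ) (c : Fin (n + 1) × Bool × Bool) (o : Bool) :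
    qgMeas n S (qgNext n S c o) = o := by
  unfold qgNext qgMeas
  dsimp only
  split_ifs <;> simp_all [Bool.xor_left_comm]

theorem qgNext_fst (n : ℕ) (S : Finset ℕ) (c : Fin (n + 1) × Bool × Bool) (o : Bool) :
    (qgNext n S c o).1 = c.1 + 1 := by
  dsimp only [qgNext]; split_ifs <;> rfl

theorem qgNext_snd_fst (n : ℕ) (S : Finset ℕ) (c : Fin (n + 1) × Bool × Bool) (o : Bool) :
    (qgNext n S c o).2.1 =
      if ((c.1 + 1 : Fin (n + 1)) : ℕ) ≠ 0 ∧ ((c.1 + 1 : Fin (n + 1)) : ℕ) ∉ S then c.2.1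
      else if ((c.1 + 1 : Fin (n + 1)) : ℕ) ∈ S ∧
          ((c.1 + 1 : Fin (n + 1)) : ℕ) ≠ sInf (S : Set ℕ) then xor c.2.1 o
      else o := by
  dsimp only [qgNext]; split_ifs <;> rfl

theorem exists_qgU_apply_eq {n : ℕ} {S : Finset ℕ} {η : ℝ} (hη₀ : 0 < η) (hη₁ : η < 1)
    (c : Fin (n + 1) × Bool × Bool) (o : Bool) :
    ∃ a ≠ 0, ∀ r, qgMeas n S r = o →
      qgU n S η r c = if r = qgNext n S c o then a else 0 := by
  obtain ⟨j, k, l⟩ := c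
  have hsqrt2 : ((Real.sqrt 2 : ℝ) : ℂ)⁻¹ ≠ 0 := by simp
  have hIsqrt2 : Complex.I * ((Real.sqrt 2 : ℝ) : ℂ)⁻¹ ≠ 0 := by simp
  rcases j.is_le.lt_or_eq with hj | hj
  · have hval : ((j + 1 : Fin (n + 1)) : ℕ) = j + 1 := Fin.val_add_one_of_lt' (by omega)
    by_cases hS : (j : ℕ) + 1 ∈ S
    · by_cases hmin : sInf (S : Set ℕ) = (j : ℕ) + 1
      · refine exists_apply_eq_ite_of_two_branch (r₁ := (j + 1, k, l)) (r₂ := (j + 1, !k, l))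
          (fun r => by simp [qgU, hj, hS, hmin]) ?_ hsqrt2 hIsqrt2 ?_ (qgMeas_qgNext n S _ o)
        · simp [qgMeas, hval, hS, hmin]
        · cases o <;> simp [qgNext, hval, hS, hmin]
      · refine exists_apply_eq_ite_of_two_branch (r₁ := (j + 1, xor k l, k))
          (r₂ := (j + 1, !(xor k l), k)) (fun r => by simp [qgU, hj, hS, Ne.symm hmin]) ?_
          hsqrt2 hIsqrt2 ?_ (qgMeas_qgNext n S _ o)
        · simp [qgMeas, hval, hS, Ne.symm hmin]
        · cases o <;> cases k <;> cases l <;> simp [qgNext, hval, hS, Ne.symm hmin]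
    · refine exists_apply_eq_ite_of_two_branch (r₁ := (j + 1, k, l)) (r₂ := (j + 1, k, !l))
        (fun r => by simp [qgU, hj, hS]) ?_ hsqrt2 hIsqrt2 ?_ (qgMeas_qgNext n S _ o)
      · simp [qgMeas, hval, hS]
      · cases o <;> cases l <;> simp [qgNext, hval, hS]
  · have hval : ((j + 1 : Fin (n + 1)) : ℕ) = 0 := by
      rw [show j = Fin.last n from Fin.ext hj, Fin.last_add_one]; rfl
    have h0 : ¬ (0 ∈ S ∧ ¬ 0 = sInf (S : Set ℕ)) := fun h =>
      h.2 (Nat.eq_zero_of_le_zero (Nat.sInf_le (Finset.mem_coe.mpr h.1))).symm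
    refine exists_apply_eq_ite_of_two_branch (r₁ := (j + 1, k, l)) (r₂ := (j + 1, !k, l))
      (a₁ := ((Real.sqrt (1 - η) : ℝ) : ℂ)) (a₂ := Complex.I * ((Real.sqrt η : ℝ) : ℂ))
      (fun r => by simp [qgU, hj]) ?_ (by simpa [Real.sqrt_eq_zero'] using hη₁)
      (by simpa [Real.sqrt_eq_zero'] using hη₀) ?_ (qgMeas_qgNext n S _ o)
    · simp [qgMeas, hval, if_neg h0]
    · cases o <;> simp [qgNext, hval, if_neg h0]

theorem exists_qgProj_mulVec_single_eq {n : ℕ} {S : Finset ℕ} {η : ℝ} (hη₀ : 0 < η)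
    (hη₁ : η < 1) (c : Fin (n + 1) × Bool × Bool) (o : Bool) {ρ : ℂ} (hρ : ρ ≠ 0) :
    ∃ ρ' : ℂ, ‖ρ'‖ = 1 ∧
      ((Real.sqrt (∑ i, Complex.normSq
        (qgProj n S o ((qgU n S η).mulVec (Pi.single c ρ)) i)) : ℝ) : ℂ)⁻¹ •
        qgProj n S o ((qgU n S η).mulVec (Pi.single c ρ)) = Pi.single (qgNext n S c o) ρ' := by
  obtain ⟨a, ha, hU⟩ := exists_qgU_apply_eq (S := S) hη₀ hη₁ c o
  have hproj : qgProj n S o ((qgU n S η).mulVec (Pi.single c ρ)) =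
      Pi.single (qgNext n S c o) (a * ρ) :=
    filter_mulVec_single_eq_single hU (qgMeas_qgNext n S c o) ρ
  rw [hproj, inv_sqrt_sum_normSq_smul_single]
  exact ⟨_, norm_smul_inv_norm (mul_ne_zero ha hρ), rfl⟩

noncomputable def qgPath (n : ℕ) (S : Finset ℕ) (x : ℕ → Bool) : ℕ → Fin (n + 1) × Bool × Bool
  | 0 => (0, false, false)
  | t + 1 => qgNext n S (qgPath n S x t) (x (t + 1))

theorem qgPath_fst (n : ℕ) (S : Finset ℕ) (x : ℕ → Bool) (t : ℕ) :
    ((qgPath n S x t).1 : ℕ) = t % (n + 1) := by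
  induction t with
  | zero => rfl
  | succ t ih => rw [qgPath, qgNext_fst, Fin.val_add, ih, Fin.val_one', ← Nat.add_mod]

theorem exists_norm_eq_one_eq_single_qgPath {n : ℕ} {S : Finset ℕ} {η : ℝ} (hη₀ : 0 < η)
    (hη₁ : η < 1) (x : ℕ → Bool) (ψ : ℕ → (Fin (n + 1) × Bool × Bool → ℂ))
    (hψ0 : ψ 0 = fun i => if i = (0, false, false) then 1 else 0)
    (hstep : ∀ t, ψ (t + 1) =
      ((Real.sqrt (∑ i, Complex.normSq
        (qgProj n S (x (t + 1)) ((qgU n S η).mulVec (ψ t)) i)) : ℝ) : ℂ)⁻¹ •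
        qgProj n S (x (t + 1)) ((qgU n S η).mulVec (ψ t))) (t : ℕ) :
    ∃ ρ : ℂ, ‖ρ‖ = 1 ∧ ψ t = Pi.single (qgPath n S x t) ρ := by
  induction t with
  | zero => exact ⟨1, norm_one, hψ0.trans (funext fun i => (Pi.single_apply _ _ i).symm)⟩
  | succ t ih =>
    obtain ⟨ρ, hρ, hψ⟩ := ih
    rw [hstep, hψ]
    exact exists_qgProj_mulVec_single_eq hη₀ hη₁ _ _ (norm_ne_zero_iff.mp (hρ ▸ one_ne_zero))

def blockParity (n : ℕ) (S : Finset ℕ) (x : ℕ → Bool) (t : ℕ) : Bool :=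
  decide (Odd (((Finset.Ioc (t - t % (n + 1)) t).filter
    fun t' => t' % (n + 1) ∈ S ∧ x t' = true).card))

theorem blockParity_add_one {n : ℕ} {S : Finset ℕ} {x : ℕ → Bool} {t : ℕ}
    (h : t % (n + 1) < n) :
    blockParity n S x (t + 1) =
      xor (blockParity n S x t) (decide ((t + 1) % (n + 1) ∈ S ∧ x (t + 1) = true)) := by
  unfold blockParity
  rw [show t + 1 - (t + 1) % (n + 1) = t - t % (n + 1) by
    rw [Nat.add_one_mod_of_mod_lt h]; omega]
  exact decide_odd_card_filter_Ioc_add_one (Nat.sub_le _ _) _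

theorem blockParity_eq_false {n : ℕ} {S : Finset ℕ} {x : ℕ → Bool} {t : ℕ}
    (h : ∀ s ∈ S, t % (n + 1) < s) : blockParity n S x t = false := by
  unfold blockParity
  rw [Finset.filter_false_of_mem fun t' ht' hS =>
    (h _ hS.1).not_ge (Nat.mod_le_mod_of_mem_Ioc_sub_mod ht')]
  simp

theorem qgPath_snd_fst_eq_blockParity {n : ℕ} {S : Finset ℕ} (hS : S.Nonempty) (h0 : 0 ∉ S)
    (x : ℕ → Bool) (t : ℕ) (ht : sInf (S : Set ℕ) ≤ t % (n + 1)) :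
    (qgPath n S x t).2.1 = blockParity n S x t := by
  have hmin : sInf (S : Set ℕ) ∈ S := Nat.sInf_mem (Finset.coe_nonempty.mpr hS)
  have hle : ∀ s ∈ S, sInf (S : Set ℕ) ≤ s := fun s hs => Nat.sInf_le (Finset.mem_coe.mpr hs)
  induction t with
  | zero => exact absurd (Nat.le_zero.mp ht ▸ hmin) h0
  | succ t ih =>
    have hval : (((qgPath n S x t).1 + 1 : Fin (n + 1)) : ℕ) = (t + 1) % (n + 1) := by
      rw [Fin.val_add, qgPath_fst, Fin.val_one', ← Nat.add_mod]
    have hj : t % (n + 1) < n := by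
      by_contra hj
      have := Nat.mod_lt t (show 0 < n + 1 by omega)
      have : (t + 1) % (n + 1) = 0 := Nat.succ_mod_succ_eq_zero_iff.mpr (by omega)
      exact h0 (Nat.le_zero.mp (this ▸ ht) ▸ hmin)
    have hsucc := Nat.add_one_mod_of_mod_lt hj
    rw [qgPath, qgNext_snd_fst, hval, blockParity_add_one hj]
    by_cases hj₁ : (t + 1) % (n + 1) ∈ S
    · by_cases hj₂ : (t + 1) % (n + 1) = sInf (S : Set ℕ)
      · rw [if_neg (fun h => h.2 hj₁), if_neg (fun h => h.2 hj₂),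
          blockParity_eq_false (fun s hs => by have := hle s hs; omega)]
        simp [hj₁]
      · rw [if_neg (fun h => h.2 hj₁), if_pos ⟨hj₁, hj₂⟩, ih (by have := hle _ hj₁; omega)]
        simp [hj₁]
    · rw [if_pos ⟨by omega, hj₁⟩, ih ?_]
      · simp [hj₁]
      · have : (t + 1) % (n + 1) ≠ sInf (S : Set ℕ) := fun h => hj₁ (h ▸ hmin)
        omega

open Classical in

open Classical in
theorem stmt18_general (n : ℕ) (S : Finset ℕ) (hS : S.Nonempty)
    (hSsub : S ⊆ Finset.Icc 1 n) (η : ℝ) (hη : 0 < η) (hη' : η < 1 / 2)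
    (x : ℕ → Bool) (ψ : ℕ → (Fin (n + 1) × Bool × Bool → ℂ))
    (hψ0 : ψ 0 = fun i => if i = (0, false, false) then 1 else 0)
    (hstep : ∀ t, ψ (t + 1) =
      ((Real.sqrt (∑ i, Complex.normSq
        (qgProj n S (x (t + 1)) ((qgU n S η).mulVec (ψ t)) i)) : ℝ) : ℂ)⁻¹ •
        qgProj n S (x (t + 1)) ((qgU n S η).mulVec (ψ t))) :
    ∀ t : ℕ, sInf (S : Set ℕ) ≤ t % (n + 1) →
      ∃ (ρ : ℂ) (l : Bool), ‖ρ‖ = 1 ∧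
        ψ t = fun i => if i =
            ((⟨t % (n + 1), Nat.mod_lt t (Nat.succ_pos n)⟩ : Fin (n + 1)),
             decide (Odd (((Finset.Ioc (t - t % (n + 1)) t).filter
               fun t' => t' % (n + 1) ∈ S ∧ x t' = true).card)),
             l)
          then ρ else 0 := by
  intro t ht
  have h0 : 0 ∉ S := fun h => by simpa using hSsub h
  obtain ⟨ρ, hρ, hψ⟩ :=
    exists_norm_eq_one_eq_single_qgPath hη (by linarith) x ψ hψ0 hstep t
  have hpath : qgPath n S x t = (⟨t % (n + 1), Nat.mod_lt t (Nat.succ_pos n)⟩,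
      blockParity n S x t, (qgPath n S x t).2.2) :=
    Prod.ext (Fin.ext (qgPath_fst n S x t))
      (Prod.ext (qgPath_snd_fst_eq_blockParity hS h0 x t ht) rfl)
  exact ⟨ρ, (qgPath n S x t).2.2, hρ, hψ.trans ((congrArg (Pi.single · ρ) hpath).trans
    (funext fun i => Pi.single_apply _ _ i))⟩

open Classical in
open Classical in
/-- Parity invariant: in the noisy-parity quantum generator started at basis state `(0,0,0)`,
for every time `t` with `t mod (n+1) = j ≥ min S`, the state `ψ_t` is supported on a basis
state `(j,k,ℓ)` whose half-index `k` equals the XOR of the measured bits `x_{t'}` over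
`t' ∈ (t-j, t]` with `t' mod (n+1) ∈ S`. -/
theorem stmt18 (n : ℕ) (hn : 1 ≤ n) (S : Finset ℕ) (hS : S.Nonempty)
    (hSsub : S ⊆ Finset.Icc 1 n) (η : ℝ) (hη : 0 < η) (hη' : η < 1 / 2)
    (x : ℕ → Bool) (ψ : ℕ → (Fin (n + 1) × Bool × Bool → ℂ))
    (hψ0 : ψ 0 = fun i => if i = (0, false, false) then 1 else 0)
    (hnz : ∀ t, qgProj n S (x (t + 1)) ((qgU n S η).mulVec (ψ t)) ≠ 0)
    (hstep : ∀ t, ψ (t + 1) =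
      ((Real.sqrt (∑ i, Complex.normSq
        (qgProj n S (x (t + 1)) ((qgU n S η).mulVec (ψ t)) i)) : ℝ) : ℂ)⁻¹ •
        qgProj n S (x (t + 1)) ((qgU n S η).mulVec (ψ t))) :
    ∀ t : ℕ, sInf (S : Set ℕ) ≤ t % (n + 1) →
      ∃ (ρ : ℂ) (l : Bool), ‖ρ‖ = 1 ∧
        ψ t = fun i => if i =
            ((⟨t % (n + 1), Nat.mod_lt t (Nat.succ_pos n)⟩ : Fin (n + 1)),
             decide (Odd (((Finset.Ioc (t - t % (n + 1)) t).filter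
               fun t' => t' % (n + 1) ∈ S ∧ x t' = true).card)),
             l)
          then ρ else 0 :=
  stmt18_general n S hS hSsub η hη hη' x ψ hψ0 hstep
end
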